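/- arXiv:1706.01908 — 3 statements merged into one kernel-verified Lean document; each statement's English description precedes it below -/
import Mathlib

section
/- Let X be a type and consider the cosimplicial set coTHH_×^•(X) (the cyclic cobar construction of X with respect to the cartesian product, where comultiplication is the diagonal). For every n ≥ 2, the matching map σ : coTHH_×^n(X) = X^{n+1} → M_n(coTHH_×^•(X)), given by y ↦ (σ_0(y), …, σ_{n-1}(y)), is a bijection. -/
/-!
A tuple `y` is determined by `σ_0 y`, which forgets only coordinate `1`, together with `y 1`, which `σ_1`
retains; this gives injectivity. Conversely a matching family `x` is hit by the tuple obtained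
by inserting `x_1(1)` into `x_0` at coordinate `1`: after applying `σ_0`, the equation
`σ_{j+1} y = x_{j+1}` becomes the matching relation for `i = 0` through the cosimplicial
identity `σ_0 σ_{j+1} = σ_j σ_0`, and at coordinate `1` it is the matching relation for `i = 1`.
-/

/-- The codegeneracy `σ_i` of `coTHH_×^•(X)` from level `n+1` to level `n`:
it deletes the `(i+1)`-st coordinate (coordinates being indexed by `0, …, n+2`). -/
def coTHHtimesCodegen (X : Type*) (n : ℕ) (i : Fin (n + 1)) (y : Fin (n + 2) → X) :
    Fin (n + 1) → X :=
  fun j => y (Fin.succAbove i.succ j)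

section

variable {X : Type*}

/-- The relation `σ_i(x_j) = σ_{j-1}(x_i)` for `i < j` is written with `j = j' + 1`. -/
def IsCoTHHtimesMatching {n : ℕ} (x : Fin (n + 2) → Fin (n + 2) → X) : Prop :=
  ∀ i j : Fin (n + 1), i ≤ j →
    coTHHtimesCodegen X n i (x j.succ) = coTHHtimesCodegen X n j (x i.castSucc)

theorem coTHHtimesCodegen_eq_removeNth (n : ℕ) (i : Fin (n + 1)) :
    coTHHtimesCodegen X n i = Fin.removeNth i.succ :=
  rfl

theorem coTHHtimesCodegen_apply_of_le {n : ℕ} {i c : Fin (n + 1)} (h : c ≤ i)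
    (y : Fin (n + 2) → X) : coTHHtimesCodegen X n i y c = y c.castSucc :=
  congrArg y (Fin.succAbove_of_castSucc_lt _ _ (Fin.castSucc_lt_succ_iff.2 h))

theorem coTHHtimesCodegen_comp_of_le {n : ℕ} {i j : Fin (n + 1)} (h : i ≤ j)
    (y : Fin (n + 3) → X) :
    coTHHtimesCodegen X n i (coTHHtimesCodegen X (n + 1) j.succ y) =
      coTHHtimesCodegen X n j (coTHHtimesCodegen X (n + 1) i.castSucc y) := by
  have hlt : i.succ.castSucc < j.succ.succ := by
    simpa [Fin.lt_def] using Nat.lt_succ_of_le h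
  simp only [coTHHtimesCodegen_eq_removeNth]
  rw [Fin.removeNth_removeNth_eq_swap, Fin.succAbove_of_castSucc_lt _ _ hlt,
    Fin.predAbove_of_castSucc_lt _ _ hlt, Fin.pred_succ, Fin.succ_castSucc]

theorem coTHHtimesCodegen_zero_ext {m : ℕ} {y y' : Fin (m + 2) → X}
    (h₀ : coTHHtimesCodegen X m 0 y = coTHHtimesCodegen X m 0 y') (h₁ : y 1 = y' 1) :
    y = y' :=
  funext <| (Fin.forall_iff_succAbove 1).2 ⟨h₁, congrFun h₀⟩

theorem coTHHtimesCodegen_ext {n : ℕ} {y y' : Fin (n + 3) → X}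
    (h : ∀ i, coTHHtimesCodegen X (n + 1) i y = coTHHtimesCodegen X (n + 1) i y') : y = y' := by
  refine coTHHtimesCodegen_zero_ext (h 0) ?_
  simpa only [coTHHtimesCodegen_apply_of_le le_rfl, Fin.castSucc_one] using congrFun (h 1) 1

theorem IsCoTHHtimesMatching.apply_succ_one {n : ℕ} {x : Fin (n + 2) → Fin (n + 2) → X}
    (hx : IsCoTHHtimesMatching x) (j : Fin (n + 1)) : x j.succ 1 = x 1 1 := by
  rcases Fin.eq_zero_or_eq_succ j with rfl | ⟨k, rfl⟩
  · rfl
  cases n with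
  | zero => exact k.elim0
  | succ m =>
    have h1 : (1 : Fin (m + 2)) ≤ k.succ := Fin.one_le_of_ne_zero k.succ_ne_zero
    simpa only [coTHHtimesCodegen_apply_of_le le_rfl, Fin.castSucc_one,
      coTHHtimesCodegen_apply_of_le h1] using congrFun (hx 1 k.succ h1) 1

theorem IsCoTHHtimesMatching.codegen_insertNth {n : ℕ} {x : Fin (n + 2) → Fin (n + 2) → X}
    (hx : IsCoTHHtimesMatching x) (i : Fin (n + 2)) :
    coTHHtimesCodegen X (n + 1) i (Fin.insertNth 1 (x 1 1) (x 0)) = x i := by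
  rcases Fin.eq_zero_or_eq_succ i with rfl | ⟨j, rfl⟩
  · exact Fin.removeNth_insertNth _ _ _
  refine coTHHtimesCodegen_zero_ext ?_ ?_
  · rw [coTHHtimesCodegen_comp_of_le (Fin.zero_le j), hx 0 j (Fin.zero_le j)]
    exact congrArg _ (Fin.removeNth_insertNth _ _ _)
  · rw [coTHHtimesCodegen_apply_of_le (Fin.one_le_of_ne_zero j.succ_ne_zero), Fin.castSucc_one,
      hx.apply_succ_one]
    exact Fin.insertNth_apply_same _ _ _

end

/-- For `n ≥ 2` (written here as `n + 2`), the matching map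
`σ : coTHH_×^{n+2}(X) = X^{n+3} → M_{n+2}(coTHH_×^•(X))`, `y ↦ (σ_0 y, …, σ_{n+1} y)`,
is a bijection: it is injective and its range is exactly the matching set
`{(x_0,…,x_{n+1}) : σ_i (x_j) = σ_{j-1} (x_i) for i < j}` (the condition being written below
with `j = j'+1`, i.e. `σ_i (x_{j'+1}) = σ_{j'} (x_i)` for `i ≤ j'`). -/
theorem coTHHtimes_matching_bijective (X : Type*) (n : ℕ) :
    Function.Injective
        (fun (y : Fin (n + 3) → X) => fun i : Fin (n + 2) => coTHHtimesCodegen X (n + 1) i y) ∧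
      Set.range
          (fun (y : Fin (n + 3) → X) => fun i : Fin (n + 2) => coTHHtimesCodegen X (n + 1) i y) =
        {x : Fin (n + 2) → Fin (n + 2) → X |
          ∀ i j : Fin (n + 1), i ≤ j →
            coTHHtimesCodegen X n i (x j.succ) = coTHHtimesCodegen X n j (x i.castSucc)} := by
  refine ⟨fun y y' h => coTHHtimesCodegen_ext (congrFun h), Set.ext fun x => ⟨?_, ?_⟩⟩
  · rintro ⟨y, rfl⟩ i j hij
    exact coTHHtimesCodegen_comp_of_le hij y
  · intro hx
    exact ⟨_, funext (IsCoTHHtimesMatching.codegen_insertNth hx)⟩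
end

section
/- Let k be a commutative ring and (C, Δ, ε) a counital coassociative k-coalgebra admitting a k-linear map η : k → C with ε ∘ η = id_k. Then for every n ≥ 0 the matching map σ : coTHH^n(C) = C^{⊗(n+1)} → M_n(coTHH^•(C)), y ↦ (σ_0(y),…,σ_{n-1}(y)), is surjective. -/
/-!
If `ε v = 1` (here `v = η 1`), inserting `v` as the `p`-th tensor factor is a section of the
codegeneracy `σ` that applies `ε` in that factor, and it commutes with the other codegeneracies
up to the usual reindexing by `succAbove`/`predAbove`. One solves `σ_i y = x_i` for
`i = 0, 1, …` in turn: at step `r`, add to `y` the defect `x_r - σ_r y` with `v` inserted in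
the slot `σ_r` deletes. For `i < r`, the cosimplicial identity `σ σ = σ σ` and the matching
condition `σ_i x_r = σ_{r-1} x_i` show that `σ_i` kills this correction, so the equations
already solved survive.
-/

open scoped TensorProduct

noncomputable section

namespace CoTHH

set_option linter.unusedSectionVars false

variable {k : Type*} [CommRing k] {C : Type*} [AddCommGroup C] [Module k C]

private lemma update_succAbove_self {n : ℕ} [DecidableEq (Fin (n + 1))] (c : Fin (n + 1) → C) (p : Fin (n + 1)) (v : C) :
    (fun j => Function.update c p v (p.succAbove j)) = fun j => c (p.succAbove j) := by
  funext j
  exact Function.update_of_ne (Fin.succAbove_ne p j) _ _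

private lemma update_succAbove_other {n : ℕ} [DecidableEq (Fin (n + 1))] [DecidableEq (Fin n)] (c : Fin (n + 1) → C) (p : Fin (n + 1))
    (j₀ : Fin n) (v : C) :
    (fun j => Function.update c (p.succAbove j₀) v (p.succAbove j)) =
      Function.update (fun j => c (p.succAbove j)) j₀ v := by
  funext j
  rcases eq_or_ne j j₀ with rfl | hj
  · simp
  · rw [Function.update_of_ne (Fin.succAbove_right_injective.ne hj),
      Function.update_of_ne hj]

/-- The codegeneracy-type operator on tensor powers: given a linear functional
`ε : C → k`, the map `id^{⊗p} ⊗ ε ⊗ id^{⊗(n-p)} : C^{⊗(n+1)} → C^{⊗n}` applying `ε`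
in the `p`-th tensor factor (and deleting that factor). -/
def epsAt (ε : C →ₗ[k] k) (n : ℕ) (p : Fin (n + 1)) :
    (⨂[k] (_ : Fin (n + 1)), C) →ₗ[k] ⨂[k] (_ : Fin n), C :=
  PiTensorProduct.lift
    { toFun := fun c => ε (c p) • PiTensorProduct.tprod k (fun j => c (p.succAbove j))
      map_update_add' := by
        intro _ c m x y
        try dsimp only
        rcases eq_or_ne m p with rfl | hmp
        · rw [update_succAbove_self, update_succAbove_self, update_succAbove_self]
          simp [add_smul]
        · obtain ⟨j₀, rfl⟩ := Fin.exists_succAbove_eq hmp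
          rw [update_succAbove_other, update_succAbove_other, update_succAbove_other]
          simp only [Function.update_of_ne (Fin.ne_succAbove p j₀)]
          rw [MultilinearMap.map_update_add, smul_add]
      map_update_smul' := by
        intro _ c m s x
        try dsimp only
        rcases eq_or_ne m p with rfl | hmp
        · rw [update_succAbove_self, update_succAbove_self]
          simp [mul_smul]
        · obtain ⟨j₀, rfl⟩ := Fin.exists_succAbove_eq hmp
          rw [update_succAbove_other, update_succAbove_other]
          simp only [Function.update_of_ne (Fin.ne_succAbove p j₀)]
          rw [MultilinearMap.map_update_smul, smul_comm] }

/-- The codegeneracy operators with uniform indexing: `epsAt' ε n p : C^{⊗n} → C^{⊗(n-1)}`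
applies `ε` in the `p`-th factor.  In particular `σ_i : C^{⊗(m+2)} → C^{⊗(m+1)}`
(the `i`-th codegeneracy `id^{⊗(i+1)} ⊗ ε ⊗ id^{⊗(m-i)}` of `coTHH^•(C)` at level `m+1`)
is `epsAt' ε (m+2) (i+1)`. -/
def epsAt' (ε : C →ₗ[k] k) : ∀ (n : ℕ), Fin n → ((⨂[k] (_ : Fin n), C) →ₗ[k] ⨂[k] (_ : Fin (n - 1)), C)
  | n + 1, p => epsAt ε n p

def insertAt (v : C) (n : ℕ) (p : Fin (n + 1)) :
    (⨂[k] (_ : Fin n), C) →ₗ[k] ⨂[k] (_ : Fin (n + 1)), C :=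
  PiTensorProduct.lift ((PiTensorProduct.tprod k (s := fun _ : Fin (n + 1) => C)).curryMid p v)

@[simp]
lemma epsAt_tprod (ε : C →ₗ[k] k) (n : ℕ) (p : Fin (n + 1)) (c : Fin (n + 1) → C) :
    epsAt ε n p (PiTensorProduct.tprod k c) =
      ε (c p) • PiTensorProduct.tprod k (p.removeNth c) :=
  PiTensorProduct.lift.tprod _

@[simp]
lemma insertAt_tprod (v : C) (n : ℕ) (p : Fin (n + 1)) (c : Fin n → C) :
    insertAt (k := k) v n p (PiTensorProduct.tprod k c) =
      PiTensorProduct.tprod k (p.insertNth v c) := by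
  simp [insertAt]

lemma epsAt_insertAt_self (ε : C →ₗ[k] k) (v : C) (n : ℕ) (p : Fin (n + 1))
    (z : ⨂[k] (_ : Fin n), C) :
    epsAt ε n p (insertAt v n p z) = ε v • z := by
  induction z using PiTensorProduct.induction_on with
  | smul_tprod r c => simp [map_smul, smul_comm r]
  | add z₁ z₂ h₁ h₂ => simp only [map_add, h₁, h₂, smul_add]

lemma epsAt_succAbove_insertAt (ε : C →ₗ[k] k) (v : C) (n : ℕ) (i : Fin (n + 2))
    (j : Fin (n + 1)) (z : ⨂[k] (_ : Fin (n + 1)), C) :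
    epsAt ε (n + 1) (i.succAbove j) (insertAt v (n + 1) i z) =
      insertAt v n (j.predAbove i) (epsAt ε n j z) := by
  induction z using PiTensorProduct.induction_on with
  | smul_tprod r c =>
    have hremove : (i.succAbove j).removeNth (α := fun _ => C) (i.insertNth v c) =
        (j.predAbove i).insertNth (α := fun _ => C) v (j.removeNth c) := by
      rw [Fin.eq_insertNth_iff, Fin.removeNth_removeNth_eq_swap]
      simp [Fin.removeNth, Fin.succAbove_succAbove_predAbove, Fin.predAbove_predAbove_succAbove]
    simp [map_smul, hremove]
  | add z₁ z₂ h₁ h₂ => simp only [map_add, h₁, h₂]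

lemma epsAt_epsAt_swap (ε : C →ₗ[k] k) (n : ℕ) (i : Fin (n + 1)) (j : Fin (n + 2))
    (z : ⨂[k] (_ : Fin (n + 2)), C) :
    epsAt ε n i (epsAt ε (n + 1) j z) =
      epsAt ε n (i.predAbove j) (epsAt ε (n + 1) (j.succAbove i) z) := by
  induction z using PiTensorProduct.induction_on with
  | smul_tprod r c =>
    simp only [map_smul, epsAt_tprod, Fin.removeNth_removeNth_eq_swap c i j, smul_smul]
    rw [Fin.removeNth_apply, Fin.removeNth_apply, Fin.succAbove_succAbove_predAbove,
      mul_right_comm r]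
  | add z₁ z₂ h₁ h₂ => simp only [map_add, h₁, h₂]

section MatchingLift

variable (ε : C →ₗ[k] k) {m : ℕ}

/-- `x` lies in the matching object `M_{m+1}(coTHH^•(C))`. -/
def IsMatchingFamily (x : Fin (m + 1) → ⨂[k] (_ : Fin (m + 1)), C) : Prop :=
  ∀ i j : Fin (m + 1), (hij : (i : ℕ) < (j : ℕ)) →
    epsAt ε m ⟨(i : ℕ) + 1, by omega⟩ (x j) = epsAt ε m j (x i)

variable {ε} {v : C} {x : Fin (m + 1) → ⨂[k] (_ : Fin (m + 1)), C}

lemma epsAt_succ_add_insertAt_sub (hv : ε v = 1) (hx : IsMatchingFamily ε x)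
    (y : ⨂[k] (_ : Fin (m + 2)), C) (r : Fin (m + 1))
    (hy : ∀ i < r, epsAt ε (m + 1) i.succ y = x i) (i : Fin (m + 1)) (hir : i ≤ r) :
    epsAt ε (m + 1) i.succ (y + insertAt v (m + 1) r.succ (x r - epsAt ε (m + 1) r.succ y)) =
      x i := by
  rcases hir.lt_or_eq with hir | rfl
  · set p : Fin (m + 1) := ⟨(i : ℕ) + 1, by omega⟩
    have hp : p.castSucc < r.succ := by rw [Fin.lt_def]; simpa [p] using hir
    have hsuccAbove : r.succ.succAbove p = i.succ := by
      rw [Fin.succAbove_of_castSucc_lt _ _ hp]; rfl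
    have hpredAbove : p.predAbove r.succ = r := by
      rw [Fin.predAbove_of_castSucc_lt _ _ hp, Fin.pred_succ]
    have hdefect : epsAt ε m p (x r - epsAt ε (m + 1) r.succ y) = 0 := by
      rw [map_sub, epsAt_epsAt_swap, hsuccAbove, hpredAbove, hy i hir, hx i r hir, sub_self]
    rw [map_add, hy i hir, ← hsuccAbove, epsAt_succAbove_insertAt, hdefect, map_zero, add_zero]
  · rw [map_add, epsAt_insertAt_self, hv, one_smul, add_sub_cancel]

lemma exists_epsAt_succ_eq (hv : ε v = 1) (hx : IsMatchingFamily ε x) :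
    ∃ y : ⨂[k] (_ : Fin (m + 2)), C, ∀ i : Fin (m + 1), epsAt ε (m + 1) i.succ y = x i := by
  suffices partial_lift : ∀ r ≤ m + 1, ∃ y : ⨂[k] (_ : Fin (m + 2)), C,
      ∀ i : Fin (m + 1), (i : ℕ) < r → epsAt ε (m + 1) i.succ y = x i by
    obtain ⟨y, hy⟩ := partial_lift (m + 1) le_rfl
    exact ⟨y, fun i => hy i i.isLt⟩
  intro r hr
  induction r with
  | zero => exact ⟨0, fun i hi => absurd hi (Nat.not_lt_zero _)⟩
  | succ r ih =>
    obtain ⟨y, hy⟩ := ih (by omega)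
    let r' : Fin (m + 1) := ⟨r, by omega⟩
    exact ⟨_, fun i hi => epsAt_succ_add_insertAt_sub hv hx y r' hy i
      (Nat.lt_succ_iff.mp hi)⟩

end MatchingLift

end CoTHH

open CoTHH

theorem coTHH_matching_surjective (k : Type*) [CommRing k] (C : Type*) [AddCommGroup C]
    [Module k C] (ε : C →ₗ[k] k)
    (η : k →ₗ[k] C) (hη : ε ∘ₗ η = LinearMap.id)
    (n : ℕ) (x : Fin n → ⨂[k] (_ : Fin n), C)
    (hx : ∀ i j : Fin n, (h : (i : ℕ) < (j : ℕ)) →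
      epsAt' ε n ⟨(i : ℕ) + 1, by omega⟩ (x j) = epsAt' ε n j (x i)) :
    ∃ y : ⨂[k] (_ : Fin (n + 1)), C, ∀ i : Fin n, epsAt ε n i.succ y = x i := by
  cases n with
  | zero => exact ⟨0, fun i => i.elim0⟩
  | succ m =>
    have hη1 : ε (η 1) = 1 := LinearMap.congr_fun hη 1
    exact exists_epsAt_succ_eq hη1 hx
end
end

section
/- Let k be a field, let G and H be groups, let V be a k-linear representation of G and W a k-linear representation of H. Then the canonical k-linear map V^G ⊗_k W^H → (V ⊗_k W)^{G×H}, induced by the inclusions of the invariant subspaces V^G ⊆ V and W^H ⊆ W (where G×H acts on V ⊗_k W by (g,h)·(v⊗w) = (g·v)⊗(h·w)), is an isomorphism. -/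
/-!
Over a field every module is flat, so `V^G ⊗ W^H → V^G ⊗ W → V ⊗ W` is a composite of
injections. For the range, expand a `(G × H)`-invariant tensor `x = ∑ vᵢ ⊗ wᵢ` along a
basis `(wᵢ)` of `W`: the elements `(g, 1)` act coefficientwise, so every `vᵢ` is
`G`-invariant and `x ∈ V^G ⊗ W`; the same argument on the other factor, applied to the
preimage of `x` in `V^G ⊗ W`, puts it in `V^G ⊗ W^H`.
-/

open scoped TensorProduct

namespace TensorProduct

variable {R M M' N κ : Type*} [CommRing R] [AddCommGroup M] [Module R M] [AddCommGroup M']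
  [Module R M'] [AddCommGroup N] [Module R N] [DecidableEq κ] (𝒞 : Module.Basis κ R N)

lemma equivFinsuppOfBasisRight_rTensor (f : M →ₗ[R] M') (x : M ⊗[R] N) :
    equivFinsuppOfBasisRight 𝒞 (f.rTensor N x) =
      Finsupp.mapRange f f.map_zero (equivFinsuppOfBasisRight 𝒞 x) := by
  induction x using TensorProduct.induction_on with
  | zero => simp
  | tmul m n => ext i; simp
  | add x y hx hy => simp [hx, hy, Finsupp.mapRange_add]

lemma mem_range_rTensor_subtype_of_forall_mem (p : Submodule R M) {x : M ⊗[R] N}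
    (hx : ∀ i, equivFinsuppOfBasisRight 𝒞 x i ∈ p) :
    x ∈ LinearMap.range (p.subtype.rTensor N) := by
  rw [← (equivFinsuppOfBasisRight 𝒞).symm_apply_apply x, equivFinsuppOfBasisRight_symm_apply]
  exact Submodule.sum_mem _ fun i _ => ⟨⟨_, hx i⟩ ⊗ₜ 𝒞 i, rfl⟩

end TensorProduct

namespace Representation

variable {R G V W : Type*} [CommRing R] [Group G] [AddCommGroup V] [Module R V]
  [AddCommGroup W] [Module R W]

lemma comp_subtype_invariants (ρ : Representation R G V) (g : G) :
    ρ g ∘ₗ ρ.invariants.subtype = ρ.invariants.subtype :=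
  LinearMap.ext fun v => v.2 g

lemma mem_range_rTensor_invariants [Module.Free R W] (ρ : Representation R G V) {x : V ⊗[R] W}
    (hx : ∀ g, (ρ g).rTensor W x = x) :
    x ∈ LinearMap.range (ρ.invariants.subtype.rTensor W) := by
  classical
  let 𝒞 := Module.Free.chooseBasis R W
  refine TensorProduct.mem_range_rTensor_subtype_of_forall_mem 𝒞 _ fun i g => ?_
  simpa [TensorProduct.equivFinsuppOfBasisRight_rTensor] using
    congr(TensorProduct.equivFinsuppOfBasisRight 𝒞 $(hx g) i)

lemma mem_range_lTensor_invariants [Module.Free R V] (ρ : Representation R G W) {x : V ⊗[R] W}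
    (hx : ∀ g, (ρ g).lTensor V x = x) :
    x ∈ LinearMap.range (ρ.invariants.subtype.lTensor V) := by
  obtain ⟨y, hy⟩ := mem_range_rTensor_invariants ρ (x := _root_.TensorProduct.comm R V W x)
    fun g => by rw [LinearMap.rTensor_comm, hx]
  refine ⟨_root_.TensorProduct.comm R _ V y, ?_⟩
  rw [LinearMap.lTensor_comm, hy, _root_.TensorProduct.comm_comm]

variable {H : Type*} [Group H] (ρ : Representation R G V) (σ : Representation R H W)

lemma range_map_subtype_invariants_le :
    LinearMap.range (TensorProduct.map ρ.invariants.subtype σ.invariants.subtype) ≤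
      (tprod (ρ.comp (MonoidHom.fst G H)) (σ.comp (MonoidHom.snd G H))).invariants := by
  rintro _ ⟨z, rfl⟩ ⟨g, h⟩
  rw [tprod_apply, ← LinearMap.comp_apply, ← TensorProduct.map_comp]
  simp only [MonoidHom.coe_comp, Function.comp_apply, MonoidHom.coe_fst, MonoidHom.coe_snd,
    comp_subtype_invariants]

variable {ρ σ} {x : V ⊗[R] W}

lemma rTensor_apply_eq_of_mem_invariants_tprod
    (hx : x ∈ (tprod (ρ.comp (MonoidHom.fst G H)) (σ.comp (MonoidHom.snd G H))).invariants)
    (g : G) : (ρ g).rTensor W x = x := by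
  simpa [tprod_apply, LinearMap.rTensor, Module.End.one_eq_id] using hx (g, 1)

lemma lTensor_apply_eq_of_mem_invariants_tprod
    (hx : x ∈ (tprod (ρ.comp (MonoidHom.fst G H)) (σ.comp (MonoidHom.snd G H))).invariants)
    (h : H) : (σ h).lTensor V x = x := by
  simpa [tprod_apply, LinearMap.lTensor, Module.End.one_eq_id] using hx (1, h)

end Representation

open Representation in
/-- Let `k` be a field, `G` and `H` groups, `V` a `k`-linear representation of `G` and `W` a
`k`-linear representation of `H`.  The canonical `k`-linear map
`V^G ⊗[k] W^H → (V ⊗[k] W)^{G×H}` induced by the inclusions of the invariant subspaces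
(where `G × H` acts on `V ⊗ W` by `(g,h)·(v⊗w) = (g·v)⊗(h·w)`) is an isomorphism: the map
`V^G ⊗ W^H → V ⊗ W` is injective, and its range is exactly the `(G×H)`-invariants. -/
theorem invariants_tprod_iso (k : Type*) [Field k] (G H : Type*) [Group G] [Group H]
    (V W : Type*) [AddCommGroup V] [Module k V] [AddCommGroup W] [Module k W]
    (ρV : Representation k G V) (ρW : Representation k H W) :
    Function.Injective
        (TensorProduct.map ρV.invariants.subtype ρW.invariants.subtype) ∧
      LinearMap.range (TensorProduct.map ρV.invariants.subtype ρW.invariants.subtype) =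
        (Representation.tprod (ρV.comp (MonoidHom.fst G H))
          (ρW.comp (MonoidHom.snd G H))).invariants := by
  set ιV := ρV.invariants.subtype
  set ιW := ρW.invariants.subtype
  have hmap : TensorProduct.map ιV ιW = ιV.rTensor W ∘ₗ ιW.lTensor ρV.invariants :=
    (LinearMap.rTensor_comp_lTensor ..).symm
  have hιV : Function.Injective (ιV.rTensor W) :=
    Module.Flat.rTensor_preserves_injective_linearMap _ ρV.invariants.injective_subtype
  have hιW : Function.Injective (ιW.lTensor ρV.invariants) :=
    Module.Flat.lTensor_preserves_injective_linearMap _ ρW.invariants.injective_subtype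
  refine ⟨hmap ▸ hιV.comp hιW,
    le_antisymm (range_map_subtype_invariants_le ρV ρW) fun x hx => ?_⟩
  obtain ⟨y, rfl⟩ :=
    mem_range_rTensor_invariants ρV (rTensor_apply_eq_of_mem_invariants_tprod hx)
  have hy (h : H) : (ρW h).lTensor ρV.invariants y = y := hιV <| by
    rw [← lTensor_apply_eq_of_mem_invariants_tprod hx h, ← LinearMap.comp_apply,
      LinearMap.rTensor_comp_lTensor, ← LinearMap.lTensor_comp_rTensor, LinearMap.comp_apply]
  obtain ⟨z, rfl⟩ := mem_range_lTensor_invariants ρW hy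
  exact ⟨z, by rw [hmap, LinearMap.comp_apply]⟩
end
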